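/- Let q > 2 and let C' ⊆ ℤ_q^m be single-error-correcting for the channel ℛ_q with |C'| = K. Identify ℤ_q with {0,1,…,q−1} ⊆ ℤ and define the concatenated code C = {z ∈ {0,…,q−1}^{2m} : ((z_{2j} − z_{2j−1}) mod q)_{j=1,…,m} ∈ C'}. Then |C| = q^m·K and Δ(x,y) ≥ 2 for all distinct x, y ∈ C, i.e., C is a 1-code of length 2m over the q-ary asymmetric channel. -/

import Mathlib

/-! The map `z ↦ ((z_{2j})_j, pairDiff z)` is a bijection from `{0,…,q-1}^{2m}` onto
`{0,…,q-1}^m × ℤ_qᵐ`, which gives the count `qᵐ·K`.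

For the distance, suppose `x ≠ y` are in the code with `Δ(x,y) ≤ 1`. Then `y - x = p - n`,
where `p` and `n` are each zero or a unit vector, and `D := pairDiffInt` (pair differences
of integer words, reduced mod `q`) maps such a vector to `0` or to `±1` in one coordinate.
The word `pairDiff y + D n = pairDiff x + D p` therefore lies in the `ℛ_q`-balls of both
`pairDiff x` and `pairDiff y`, so these codewords coincide and `D p = D n`. Since `1 ≠ -1`
in `ℤ_q` for `q > 2`, `D` is injective on zero and the unit vectors; hence `p = n` and
`x = y`. -/

/-- `N(x,y) = Σᵢ max(yᵢ - xᵢ, 0)` for words over `{0,…,q-1} ⊆ ℤ`. -/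
def Nasym {n q : ℕ} (x y : Fin n → Fin q) : ℤ :=
  ∑ i, max (((y i : ℕ) : ℤ) - ((x i : ℕ) : ℤ)) 0

/-- The asymmetric distance `Δ(x,y) = max(N(x,y), N(y,x))`. -/
def Dasym {n q : ℕ} (x y : Fin n → Fin q) : ℤ :=
  max (Nasym x y) (Nasym y x)

/-- The `ℛ_q`-ball of `c ∈ ℤ_qᵐ`: words obtained from `c` by changing at most one
coordinate by `±1 (mod q)`. -/
def RBall {q m : ℕ} (c : Fin m → ZMod q) : Set (Fin m → ZMod q) :=
  {d | d = c ∨ ∃ i, (d i = c i + 1 ∨ d i = c i - 1) ∧ ∀ j, j ≠ i → d j = c j}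

/-- The word of pairwise differences `((z_{2j} - z_{2j-1}) mod q)_{j=1,…,m}` of a word
`z ∈ {0,…,q-1}^{2m}` (0-based: `z_{2j+1} - z_{2j}`). -/
def pairDiff (q m : ℕ) (z : Fin (2 * m) → Fin q) : Fin m → ZMod q :=
  fun j => ((z ⟨2 * (j : ℕ) + 1, by have := j.isLt; omega⟩ : ℕ) : ZMod q) -
           ((z ⟨2 * (j : ℕ), by have := j.isLt; omega⟩ : ℕ) : ZMod q)

theorem eq_zero_or_exists_eq_single_of_sum_le_one {ι : Type*} [Fintype ι] [DecidableEq ι]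
    {f : ι → ℤ} (hf : ∀ i, 0 ≤ f i) (hsum : ∑ i, f i ≤ 1) :
    f = 0 ∨ ∃ i, f = Pi.single i 1 := by
  by_cases hzero : ∀ i, f i = 0
  · exact Or.inl (funext hzero)
  push Not at hzero
  obtain ⟨i, hi⟩ := hzero
  have hrest : ∑ k ∈ Finset.univ.erase i, f k = 0 := by
    have := Finset.sum_nonneg fun k (_ : k ∈ Finset.univ.erase i) => hf k
    have := Finset.add_sum_erase Finset.univ f (Finset.mem_univ i)
    have := hf i
    omega
  rw [Finset.sum_eq_zero_iff_of_nonneg fun k _ => hf k] at hrest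
  refine Or.inr ⟨i, funext fun k => ?_⟩
  by_cases hk : k = i
  · subst hk
    have := Finset.add_sum_erase Finset.univ f (Finset.mem_univ k)
    simp only [Finset.sum_eq_zero hrest, Pi.single_eq_same] at this ⊢
    have := hf k
    omega
  · rw [Pi.single_eq_of_ne hk, hrest k (Finset.mem_erase.mpr ⟨hk, Finset.mem_univ k⟩)]

theorem add_single_mem_RBall {q m : ℕ} (c : Fin m → ZMod q) (j : Fin m) {s : ZMod q}
    (hs : s = 1 ∨ s = -1) : c + Pi.single j s ∈ RBall c := by
  refine Or.inr ⟨j, ?_, fun k hk => by simp [Pi.single_eq_of_ne hk]⟩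
  rcases hs with rfl | rfl <;> simp [sub_eq_add_neg]

def pairDiffInt (q m : ℕ) : (Fin (2 * m) → ℤ) →+ (Fin m → ZMod q) where
  toFun e j := ((e ⟨2 * j + 1, by omega⟩ - e ⟨2 * j, by omega⟩ : ℤ) : ZMod q)
  map_zero' := by funext j; simp
  map_add' e e' := by funext j; simp only [Pi.add_apply]; push_cast; ring

section pairDiffInt

variable {q m : ℕ}

theorem pairDiff_eq_pairDiffInt (z : Fin (2 * m) → Fin q) :
    pairDiff q m z = pairDiffInt q m (fun i => ((z i : ℕ) : ℤ)) := by
  funext j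
  simp [pairDiff, pairDiffInt]

theorem pairDiffInt_single (i : Fin (2 * m)) :
    pairDiffInt q m (Pi.single i 1) =
      Pi.single ⟨i / 2, by omega⟩ (if (i : ℕ) % 2 = 0 then -1 else 1) := by
  funext j
  simp only [pairDiffInt, AddMonoidHom.coe_mk, ZeroHom.coe_mk, Pi.single_apply, Fin.ext_iff]
  split_ifs <;> first | omega | simp

theorem pairDiffInt_single_ne_zero (hq : 1 < q) (i : Fin (2 * m)) :
    pairDiffInt q m (Pi.single i 1) ≠ 0 := by
  have : Fact (1 < q) := ⟨hq⟩
  rw [pairDiffInt_single, Ne, Pi.single_eq_zero_iff]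
  split_ifs <;> simp

theorem pairDiffInt_single_injective (hq : 2 < q) :
    Function.Injective fun i : Fin (2 * m) => pairDiffInt q m (Pi.single i 1) := by
  have : Fact (1 < q) := ⟨by omega⟩
  have : Fact (2 < q) := ⟨hq⟩
  intro i k h
  simp only [pairDiffInt_single] at h
  have hdiv : (i : ℕ) / 2 = k / 2 := by
    by_contra hne
    have := congrFun h ⟨i / 2, by omega⟩
    rw [Pi.single_eq_same, Pi.single_eq_of_ne (by simpa [Fin.ext_iff] using hne)] at this
    split_ifs at this <;> simp at this
  have hmod : (i : ℕ) % 2 = k % 2 := by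
    have := congrFun h ⟨i / 2, by omega⟩
    simp only [Pi.single_eq_same, hdiv] at this
    split_ifs at this with hi hk hk
    · omega
    · exact absurd this ZMod.neg_one_ne_one
    · exact absurd this.symm ZMod.neg_one_ne_one
    · omega
  exact Fin.ext (by omega)

theorem add_pairDiffInt_mem_RBall (c : Fin m → ZMod q) {p : Fin (2 * m) → ℤ}
    (hp : p = 0 ∨ ∃ i, p = Pi.single i 1) : c + pairDiffInt q m p ∈ RBall c := by
  obtain rfl | ⟨i, rfl⟩ := hp
  · rw [map_zero, add_zero]
    exact Or.inl rfl
  · rw [pairDiffInt_single]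
    exact add_single_mem_RBall c _ (by split_ifs <;> simp)

theorem eq_of_pairDiffInt_eq (hq : 2 < q) {p n : Fin (2 * m) → ℤ}
    (hp : p = 0 ∨ ∃ i, p = Pi.single i 1) (hn : n = 0 ∨ ∃ k, n = Pi.single k 1)
    (h : pairDiffInt q m p = pairDiffInt q m n) : p = n := by
  obtain rfl | ⟨i, rfl⟩ := hp <;> obtain rfl | ⟨k, rfl⟩ := hn
  · rfl
  · exact absurd h.symm (by simpa using pairDiffInt_single_ne_zero (by omega) k)
  · exact absurd h (by simpa using pairDiffInt_single_ne_zero (by omega) i)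
  · rw [pairDiffInt_single_injective hq h]

end pairDiffInt

theorem two_le_Dasym_of_pairDiff_mem {q m : ℕ} (hq : 2 < q) {C' : Set (Fin m → ZMod q)}
    (hsec : ∀ c ∈ C', ∀ c' ∈ C', c ≠ c' → Disjoint (RBall c) (RBall c'))
    {x y : Fin (2 * m) → Fin q} (hx : pairDiff q m x ∈ C') (hy : pairDiff q m y ∈ C')
    (hne : x ≠ y) : 2 ≤ Dasym x y := by
  by_contra hlt
  obtain ⟨hxy, hyx⟩ : Nasym x y ≤ 1 ∧ Nasym y x ≤ 1 := by unfold Dasym at hlt; omega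
  set X : Fin (2 * m) → ℤ := fun i => ((x i : ℕ) : ℤ)
  set Y : Fin (2 * m) → ℤ := fun i => ((y i : ℕ) : ℤ)
  set p : Fin (2 * m) → ℤ := fun i => max (Y i - X i) 0
  set n : Fin (2 * m) → ℤ := fun i => max (X i - Y i) 0
  have hY : Y = X + p - n := by funext i; simp only [Pi.add_apply, Pi.sub_apply, p, n]; omega
  have hp : p = 0 ∨ ∃ i, p = Pi.single i 1 :=
    eq_zero_or_exists_eq_single_of_sum_le_one (fun i => le_max_right _ 0) hxy
  have hn : n = 0 ∨ ∃ i, n = Pi.single i 1 :=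
    eq_zero_or_exists_eq_single_of_sum_le_one (fun i => le_max_right _ 0) hyx
  have hshift : pairDiff q m y + pairDiffInt q m n = pairDiff q m x + pairDiffInt q m p := by
    rw [pairDiff_eq_pairDiffInt x, pairDiff_eq_pairDiffInt y, ← map_add, ← map_add]
    change pairDiffInt q m (Y + n) = pairDiffInt q m (X + p)
    rw [hY, sub_add_cancel]
  have hcodeword : pairDiff q m x = pairDiff q m y := by
    by_contra hc
    refine Set.disjoint_left.mp (hsec _ hx _ hy hc) (add_pairDiffInt_mem_RBall _ hp) ?_
    exact hshift ▸ add_pairDiffInt_mem_RBall _ hn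
  have hpn : p = n := eq_of_pairDiffInt_eq hq hp hn
    (add_left_cancel (hcodeword ▸ hshift).symm)
  refine hne (funext fun i => Fin.ext ?_)
  have := congrFun hY i
  simp only [hpn, add_sub_cancel_right, X, Y] at this
  exact_mod_cast this.symm

def finEquivZMod (q : ℕ) [NeZero q] : Fin q ≃ ZMod q where
  toFun a := ((a : ℕ) : ZMod q)
  invFun c := ⟨c.val, ZMod.val_lt c⟩
  left_inv a := Fin.ext (ZMod.val_cast_of_lt a.isLt)
  right_inv c := ZMod.natCast_zmod_val c

def pairIndex (m : ℕ) : Fin m × Fin 2 ≃ Fin (2 * m) :=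
  finProdFinEquiv.trans (finCongr (Nat.mul_comm m 2))

theorem val_pairIndex {m : ℕ} (j : Fin m) (b : Fin 2) :
    (pairIndex m (j, b) : ℕ) = 2 * j + b := by
  simp [pairIndex, add_comm]

-- `z ↦ (j ↦ (z_{2j}, z_{2j+1})) ↦ (j ↦ (z_{2j}, z_{2j+1} - z_{2j}))`, then unzipped.
def pairDiffEquiv (q m : ℕ) [NeZero q] :
    (Fin (2 * m) → Fin q) ≃ (Fin m → Fin q) × (Fin m → ZMod q) :=
  ((pairIndex m).arrowCongr (.refl _)).symm.trans <| Equiv.curry _ _ _ |>.trans <|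
    ((Equiv.refl _).arrowCongr ((piFinTwoEquiv fun _ => Fin q).trans
      (Equiv.prodShear (.refl _) fun a => (finEquivZMod q).trans
        (Equiv.subRight (finEquivZMod q a))))).trans <|
    Equiv.arrowProdEquivProdArrow _ _ _

theorem pairDiffEquiv_snd (q m : ℕ) [NeZero q] (z : Fin (2 * m) → Fin q) :
    (pairDiffEquiv q m z).2 = pairDiff q m z := by
  funext j
  simp only [pairDiffEquiv, finEquivZMod, pairDiff, Equiv.arrowCongr_symm, Equiv.refl_symm,
    Equiv.coe_fn_mk, Equiv.trans_apply, Equiv.curry_apply, Equiv.arrowProdEquivProdArrow_apply,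
    Equiv.arrowCongr_apply, Equiv.coe_trans, Equiv.prodShear_apply, Equiv.refl_apply,
    Equiv.subRight_apply, piFinTwoEquiv_apply, Equiv.coe_refl, Function.comp_apply,
    Function.curry_apply, Equiv.symm_symm, id_eq]
  congr 4 <;> ext <;> simp [val_pairIndex]

theorem ncard_setOf_pairDiff_mem (q m : ℕ) [NeZero q] (S : Set (Fin m → ZMod q)) :
    Set.ncard {z : Fin (2 * m) → Fin q | pairDiff q m z ∈ S} = q ^ m * Nat.card S := by
  have hpre : {z : Fin (2 * m) → Fin q | pairDiff q m z ∈ S} =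
      pairDiffEquiv q m ⁻¹' (Set.univ ×ˢ S) := by
    ext z; simp [pairDiffEquiv_snd]
  rw [hpre, Set.ncard_preimage_of_injective_subset_range (pairDiffEquiv q m).injective (by simp),
    Set.ncard_prod, Set.ncard_univ, Nat.card_coe_set_eq]
  simp

/-- If `C' ⊆ ℤ_qᵐ` (with `q > 2`) is single-error-correcting for `ℛ_q` and `|C'| = K`,
then the concatenated code `C = {z ∈ {0,…,q-1}^{2m} : pairDiff z ∈ C'}` has cardinality
`qᵐ·K` and is a `1`-code of length `2m`: `Δ(x,y) ≥ 2` for distinct `x, y ∈ C`. -/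
theorem concat_even_one_code (q m : ℕ) (hq : 2 < q)
    (C' : Set (Fin m → ZMod q)) (K : ℕ) (hK : Nat.card C' = K)
    (hsec : ∀ c ∈ C', ∀ c' ∈ C', c ≠ c' → Disjoint (RBall c) (RBall c')) :
    Set.ncard {z : Fin (2 * m) → Fin q | pairDiff q m z ∈ C'} = q ^ m * K ∧
    ∀ x y : Fin (2 * m) → Fin q,
      pairDiff q m x ∈ C' → pairDiff q m y ∈ C' → x ≠ y → 2 ≤ Dasym x y := by
  have : NeZero q := ⟨by omega⟩
  exact ⟨hK ▸ ncard_setOf_pairDiff_mem q m C', fun x y hx hy hne =>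
    two_le_Dasym_of_pairDiff_mem hq hsec hx hy hne⟩
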